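/- Let 0 < q ≤ p < 1 and suppose I_p(x) ≥ I_p(q) + (−I_p'(q)/(2q))·((max(2q−x,0))² − q²) for all x ∈ [0,p]. Then for every symmetric measurable W : [0,1]² → [0,p] with t(K₃, W) ≤ q³, one has ∫∫ I_p(W(x,y)) dx dy ≥ I_p(q). -/

import Mathlib

/-!
Put `U = (2q - W)₊`. Then `2q - U = min W (2q)` lies between `0` and `W`, so
`t(2q - U) ≤ t(W) ≤ q³`. For a symmetric kernel, expanding the product gives Goodman's identity
`t(c - U) = c³ - 3c² e + 3c D - t(U)` with `e = ∫∫ U` and `D = ∫ deg² ≥ e²`; for `c = 2q` this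
yields `t(U) ≥ q³ + 6q (q - e)² ≥ q³`. Two applications of Cauchy–Schwarz give
`t(U)² ≤ (∫∫ U²)³`, hence `∫∫ U² ≥ q²`. Integrating the tangent-line hypothesis, whose slope
`-I_p'(q) / (2q)` is nonnegative, then gives `∫∫ I_p(W) ≥ I_p(q)`.
-/

open MeasureTheory Real

noncomputable section

def I01 : Set ℝ := Set.Icc 0 1

/-- Triangle density of a kernel `W`. -/
def tK3 (W : ℝ → ℝ → ℝ) : ℝ :=
  ∫ x in I01, ∫ y in I01, ∫ z in I01, W x y * W x z * W y z

/-- The relative entropy function `I_p`. -/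
def Ip (p x : ℝ) : ℝ := x * Real.log (x / p) + (1 - x) * Real.log ((1 - x) / (1 - p))

/-- The derivative of `I_p`. -/
def Ip' (p q : ℝ) : ℝ := Real.log (q / p) - Real.log ((1 - q) / (1 - p))

open Function
open scoped ENNReal

section Integration

variable {α β γ : Type*} [MeasurableSpace α] [MeasurableSpace β] [MeasurableSpace γ]

lemma integral_prod_prod {μ : Measure α} {ν : Measure β} {ρ : Measure γ} [SFinite μ] [SFinite ν]
    [SFinite ρ] {f : α × β × γ → ℝ} (hf : Integrable f (μ.prod (ν.prod ρ))) :
    ∫ w, f w ∂(μ.prod (ν.prod ρ)) = ∫ x, ∫ y, ∫ z, f (x, y, z) ∂ρ ∂ν ∂μ := by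
  rw [integral_prod f hf]
  refine integral_congr_ae ?_
  filter_upwards [hf.prod_right_ae] with x hx
  exact integral_prod _ hx

lemma sq_integral_mul_le {μ : Measure α} {f g : α → ℝ} (hf : MemLp f 2 μ) (hg : MemLp g 2 μ) :
    (∫ a, f a * g a ∂μ) ^ 2 ≤ (∫ a, f a ^ 2 ∂μ) * ∫ a, g a ^ 2 ∂μ := by
  have inner_toLp : ∀ {u v : α → ℝ} (hu : MemLp u 2 μ) (hv : MemLp v 2 μ),
      inner ℝ (hu.toLp u) (hv.toLp v) = ∫ a, u a * v a ∂μ := by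
    intro u v hu hv
    rw [L2.inner_def]
    refine integral_congr_ae ?_
    filter_upwards [hu.coeFn_toLp, hv.coeFn_toLp] with a hua hva
    simp [hua, hva, mul_comm]
  simpa only [inner_toLp, sq] using real_inner_mul_inner_self_le (hf.toLp f) (hg.toLp g)

variable {μ : Measure α} [IsProbabilityMeasure μ]

lemma sq_integral_le_integral_sq {f : α → ℝ} (hf : MemLp f 2 μ) :
    (∫ a, f a ∂μ) ^ 2 ≤ ∫ a, f a ^ 2 ∂μ := by
  simpa using sq_integral_mul_le hf (memLp_const (1 : ℝ))

lemma integral_const_sub_mul_const_sub_mul_const_sub {a b d : α → ℝ} (ha : MemLp a ∞ μ)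
    (hb : MemLp b ∞ μ) (hd : MemLp d ∞ μ) (c : ℝ) :
    ∫ w, (c - a w) * (c - b w) * (c - d w) ∂μ =
      c ^ 3 - c ^ 2 * (∫ w, a w ∂μ + ∫ w, b w ∂μ + ∫ w, d w ∂μ)
        + c * (∫ w, a w * b w ∂μ + ∫ w, a w * d w ∂μ + ∫ w, b w * d w ∂μ)
        - ∫ w, a w * b w * d w ∂μ := by
  have int_a := ha.integrable le_top
  have int_b := hb.integrable le_top
  have int_d := hd.integrable le_top
  have int_ab := (hb.mul' ha (r := ∞)).integrable le_top
  have int_ad := (hd.mul' ha (r := ∞)).integrable le_top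
  have int_bd := (hd.mul' hb (r := ∞)).integrable le_top
  have int_abd := (hd.mul' (hb.mul' ha (r := ∞)) (r := ∞)).integrable le_top
  have expand : ∀ w, (c - a w) * (c - b w) * (c - d w) =
      c ^ 3 - c ^ 2 * (a w + b w + d w) + c * (a w * b w + a w * d w + b w * d w)
        - a w * b w * d w := fun _ => by ring
  simp only [expand]
  rw [integral_sub, integral_add, integral_sub, integral_const, integral_const_mul, integral_add,
    integral_add, integral_const_mul, integral_add, integral_add]
  · simp
  all_goals
    repeat' first
      | assumption
      | exact integrable_const _
      | apply Integrable.const_mul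
      | apply Integrable.sub
      | apply Integrable.add

end Integration

section TriangleDensity

variable {α : Type*} [MeasurableSpace α] {μ : Measure α}

def triangleDensity (μ : Measure α) (W : α → α → ℝ) : ℝ :=
  ∫ x, ∫ y, ∫ z, W x y * W x z * W y z ∂μ ∂μ ∂μ

variable {U : α → α → ℝ} {C : ℝ}

lemma memLp_top_comp_of_abs_le {β : Type*} [MeasurableSpace β] {ν : Measure β}
    (hU : Measurable (uncurry U)) (hUb : ∀ x y, |U x y| ≤ C) {f g : β → α}
    (hf : Measurable f) (hg : Measurable g) : MemLp (fun w => U (f w) (g w)) ∞ ν :=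
  memLp_top_of_bound (hU.comp (hf.prodMk hg)).aestronglyMeasurable C
    (ae_of_all _ fun _ => hUb _ _)

variable [IsProbabilityMeasure μ]

lemma integral_integral_mul_of_symm (hU : Measurable (uncurry U)) (hUb : ∀ x y, |U x y| ≤ C)
    (hUs : ∀ x y, U x y = U y x) {φ : α → ℝ} (hφ : Integrable φ μ) :
    ∫ x, ∫ y, U x y * φ y ∂μ ∂μ = ∫ y, (∫ x, U y x ∂μ) * φ y ∂μ := by
  have hint : Integrable (uncurry fun x y => U x y * φ y) (μ.prod μ) :=
    (hφ.comp_snd μ).bdd_mul hU.aestronglyMeasurable (ae_of_all _ fun w => hUb w.1 w.2)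
  rw [integral_integral_swap hint]
  simp_rw [integral_mul_const, hUs _]

lemma integrable_triangle (hU : Measurable (uncurry U)) (hUb : ∀ x y, |U x y| ≤ C) :
    Integrable (fun w : α × α × α => U w.1 w.2.1 * U w.1 w.2.2 * U w.2.1 w.2.2)
      (μ.prod (μ.prod μ)) := by
  have ha := memLp_top_comp_of_abs_le (ν := μ.prod (μ.prod μ)) hU hUb
    measurable_fst measurable_snd.fst
  have hb := memLp_top_comp_of_abs_le (ν := μ.prod (μ.prod μ)) hU hUb
    measurable_fst measurable_snd.snd
  have hd := memLp_top_comp_of_abs_le (ν := μ.prod (μ.prod μ)) hU hUb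
    measurable_snd.fst measurable_snd.snd
  exact (hd.mul' (hb.mul' ha (r := ∞)) (r := ∞)).integrable le_top

lemma triangleDensity_eq_integral_prod (hU : Measurable (uncurry U))
    (hUb : ∀ x y, |U x y| ≤ C) :
    triangleDensity μ U =
      ∫ w, U w.1 w.2.1 * U w.1 w.2.2 * U w.2.1 w.2.2 ∂(μ.prod (μ.prod μ)) :=
  (integral_prod_prod (integrable_triangle hU hUb)).symm

lemma triangleDensity_mono {V W : α → α → ℝ} (hV : Measurable (uncurry V))
    (hW : Measurable (uncurry W)) (hV0 : ∀ x y, 0 ≤ V x y) (hVW : ∀ x y, V x y ≤ W x y)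
    (hWb : ∀ x y, |W x y| ≤ C) :
    triangleDensity μ V ≤ triangleDensity μ W := by
  have hVb : ∀ x y, |V x y| ≤ C := fun x y =>
    (abs_of_nonneg (hV0 x y)).trans_le ((hVW x y).trans ((le_abs_self _).trans (hWb x y)))
  have hW0 : ∀ x y, 0 ≤ W x y := fun x y => (hV0 x y).trans (hVW x y)
  rw [triangleDensity_eq_integral_prod hV hVb, triangleDensity_eq_integral_prod hW hWb]
  refine integral_mono (integrable_triangle hV hVb) (integrable_triangle hW hWb) fun w => ?_
  exact mul_le_mul (mul_le_mul (hVW _ _) (hVW _ _) (hV0 _ _) (hW0 _ _)) (hVW _ _) (hV0 _ _)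
    (mul_nonneg (hW0 _ _) (hW0 _ _))

lemma triangleDensity_const_sub (hU : Measurable (uncurry U)) (hUb : ∀ x y, |U x y| ≤ C)
    (hUs : ∀ x y, U x y = U y x) (c : ℝ) :
    triangleDensity μ (fun x y => c - U x y) =
      c ^ 3 - 3 * c ^ 2 * (∫ x, ∫ y, U x y ∂μ ∂μ) + 3 * c * (∫ x, (∫ y, U x y ∂μ) ^ 2 ∂μ)
        - triangleDensity μ U := by
  set ν := μ.prod (μ.prod μ)
  have ha := memLp_top_comp_of_abs_le (ν := ν) hU hUb measurable_fst measurable_snd.fst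
  have hb := memLp_top_comp_of_abs_le (ν := ν) hU hUb measurable_fst measurable_snd.snd
  have hd := memLp_top_comp_of_abs_le (ν := ν) hU hUb measurable_snd.fst measurable_snd.snd
  have hdeg : Integrable (fun x => ∫ y, U x y ∂μ) μ :=
    (Integrable.of_bound hU.aestronglyMeasurable C
      (ae_of_all _ fun w => hUb w.1 w.2)).integral_prod_left
  have e_a : ∫ w, U w.1 w.2.1 ∂ν = ∫ x, ∫ y, U x y ∂μ ∂μ := by
    rw [integral_prod_prod (ha.integrable le_top)]; simp
  have e_b : ∫ w, U w.1 w.2.2 ∂ν = ∫ x, ∫ y, U x y ∂μ ∂μ := by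
    rw [integral_prod_prod (hb.integrable le_top)]; simp
  have e_d : ∫ w, U w.2.1 w.2.2 ∂ν = ∫ x, ∫ y, U x y ∂μ ∂μ := by
    rw [integral_prod_prod (hd.integrable le_top)]; simp
  -- The three 2-paths all integrate to `∫ deg²`; the two not centred at `x` need symmetry.
  have e_ab : ∫ w, U w.1 w.2.1 * U w.1 w.2.2 ∂ν = ∫ x, (∫ y, U x y ∂μ) ^ 2 ∂μ := by
    rw [integral_prod_prod ((hb.mul' ha).integrable le_top)]
    simp [integral_const_mul, integral_mul_const, sq]
  have e_ad : ∫ w, U w.1 w.2.1 * U w.2.1 w.2.2 ∂ν = ∫ x, (∫ y, U x y ∂μ) ^ 2 ∂μ := by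
    rw [integral_prod_prod ((hd.mul' ha).integrable le_top)]
    simp only [integral_const_mul, integral_integral_mul_of_symm hU hUb hUs hdeg, sq]
  have e_bd : ∫ w, U w.1 w.2.2 * U w.2.1 w.2.2 ∂ν = ∫ x, (∫ y, U x y ∂μ) ^ 2 ∂μ := by
    rw [integral_prod_prod ((hd.mul' hb).integrable le_top)]
    have hx : ∀ x, ∫ y, ∫ z, U x z * U y z ∂μ ∂μ = ∫ z, U x z * ∫ y, U z y ∂μ ∂μ := fun x => by
      have hUx : Integrable (U x) μ :=
        .of_bound (hU.comp measurable_prodMk_left).aestronglyMeasurable C (ae_of_all _ (hUb x))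
      simp_rw [mul_comm (U x _), integral_integral_mul_of_symm hU hUb hUs hUx]
    simp only [hx, integral_integral_mul_of_symm hU hUb hUs hdeg, sq]
  have hcU : ∀ x y, |c - U x y| ≤ |c| + C := fun x y =>
    (abs_sub _ _).trans (by linarith [hUb x y])
  rw [triangleDensity_eq_integral_prod (measurable_const.sub hU) hcU,
    triangleDensity_eq_integral_prod hU hUb,
    integral_const_sub_mul_const_sub_mul_const_sub ha hb hd, e_a, e_b, e_d, e_ab, e_ad, e_bd]
  ring

lemma memLp_top_integral_mul (hU : Measurable (uncurry U)) (hUb : ∀ x y, |U x y| ≤ C) :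
    MemLp (fun w : α × α => ∫ z, U w.1 z * U w.2 z ∂μ) ∞ (μ.prod μ) := by
  have hmeas : Measurable fun q : (α × α) × α => U q.1.1 q.2 * U q.1.2 q.2 := by fun_prop
  refine memLp_top_of_bound hmeas.stronglyMeasurable.integral_prod_right'.aestronglyMeasurable
    (C * C) (ae_of_all _ fun w => ?_)
  have hbound : ∀ z, ‖U w.1 z * U w.2 z‖ ≤ C * C := fun z => by
    rw [norm_mul]
    exact mul_le_mul (hUb _ _) (hUb _ _) (norm_nonneg _) ((abs_nonneg _).trans (hUb w.1 z))
  simpa using norm_integral_le_of_norm_le_const (μ := μ) (ae_of_all _ hbound)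

lemma integral_sq_integral_mul_le (hU : Measurable (uncurry U)) (hUb : ∀ x y, |U x y| ≤ C) :
    ∫ w, (∫ z, U w.1 z * U w.2 z ∂μ) ^ 2 ∂(μ.prod μ) ≤ (∫ x, ∫ y, U x y ^ 2 ∂μ ∂μ) ^ 2 := by
  have hk := memLp_top_integral_mul (μ := μ) hU hUb
  have hUL := memLp_top_comp_of_abs_le (ν := μ.prod μ) hU hUb measurable_fst measurable_snd
  have hU2 : Integrable (fun w : α × α => U w.1 w.2 ^ 2) (μ.prod μ) := by
    simpa [sq] using (hUL.mul' hUL (r := ∞)).integrable le_top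
  have hsec : ∀ x, MemLp (U x) 2 μ := fun x =>
    (memLp_top_comp_of_abs_le hU hUb measurable_const measurable_id).mono_exponent le_top
  calc ∫ w, (∫ z, U w.1 z * U w.2 z ∂μ) ^ 2 ∂(μ.prod μ)
      ≤ ∫ w, (∫ z, U w.1 z ^ 2 ∂μ) * (∫ z, U w.2 z ^ 2 ∂μ) ∂(μ.prod μ) := by
        refine integral_mono ?_ ?_ fun w => sq_integral_mul_le (hsec w.1) (hsec w.2)
        · simpa [sq] using (hk.mul' hk (r := ∞)).integrable le_top
        · exact hU2.integral_prod_left.mul_prod hU2.integral_prod_left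
    _ = _ := (integral_prod_mul (fun x => ∫ z, U x z ^ 2 ∂μ) _).trans (sq _).symm

lemma sq_triangleDensity_le (hU : Measurable (uncurry U)) (hUb : ∀ x y, |U x y| ≤ C) :
    triangleDensity μ U ^ 2 ≤ (∫ x, ∫ y, U x y ^ 2 ∂μ ∂μ) ^ 3 := by
  have hk := memLp_top_integral_mul (μ := μ) hU hUb
  have hUL := memLp_top_comp_of_abs_le (ν := μ.prod μ) hU hUb measurable_fst measurable_snd
  have ht : triangleDensity μ U =
      ∫ w, U w.1 w.2 * ∫ z, U w.1 z * U w.2 z ∂μ ∂(μ.prod μ) := by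
    rw [integral_prod _ ((hk.mul' hUL (r := ∞)).integrable le_top)]
    simp only [triangleDensity, mul_assoc, integral_const_mul]
  have hs : ∫ w, U w.1 w.2 ^ 2 ∂(μ.prod μ) = ∫ x, ∫ y, U x y ^ 2 ∂μ ∂μ :=
    integral_prod _ (by simpa [sq] using (hUL.mul' hUL (r := ∞)).integrable le_top)
  have hs0 : 0 ≤ ∫ x, ∫ y, U x y ^ 2 ∂μ ∂μ :=
    integral_nonneg fun _ => integral_nonneg fun _ => sq_nonneg _
  calc triangleDensity μ U ^ 2
      ≤ (∫ w, U w.1 w.2 ^ 2 ∂(μ.prod μ)) *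
          ∫ w, (∫ z, U w.1 z * U w.2 z ∂μ) ^ 2 ∂(μ.prod μ) := by
        rw [ht]
        exact sq_integral_mul_le (hUL.mono_exponent le_top) (hk.mono_exponent le_top)
    _ ≤ (∫ x, ∫ y, U x y ^ 2 ∂μ ∂μ) * (∫ x, ∫ y, U x y ^ 2 ∂μ ∂μ) ^ 2 := by
        rw [hs]
        exact mul_le_mul_of_nonneg_left (integral_sq_integral_mul_le hU hUb) hs0
    _ = _ := by ring

lemma sq_le_integral_sq_of_triangleDensity_two_mul_sub_le {q : ℝ} (hq : 0 ≤ q)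
    (hU : Measurable (uncurry U)) (hUb : ∀ x y, |U x y| ≤ C) (hUs : ∀ x y, U x y = U y x)
    (ht : triangleDensity μ (fun x y => 2 * q - U x y) ≤ q ^ 3) :
    q ^ 2 ≤ ∫ x, ∫ y, U x y ^ 2 ∂μ ∂μ := by
  have hdeg : MemLp (fun x => ∫ y, U x y ∂μ) 2 μ := by
    refine (memLp_top_of_bound hU.stronglyMeasurable.integral_prod_right'.aestronglyMeasurable C
      (ae_of_all _ fun x => ?_)).mono_exponent le_top
    simpa using norm_integral_le_of_norm_le_const (μ := μ) (f := U x) (ae_of_all _ (hUb x))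
  have hjensen := sq_integral_le_integral_sq hdeg
  have hgoodman := triangleDensity_const_sub hU hUb hUs (μ := μ) (2 * q)
  set e := ∫ x, ∫ y, U x y ∂μ ∂μ
  have htU : q ^ 3 ≤ triangleDensity μ U := by
    nlinarith [mul_nonneg hq (sq_nonneg (q - e))]
  have hs : 0 ≤ ∫ x, ∫ y, U x y ^ 2 ∂μ ∂μ :=
    integral_nonneg fun _ => integral_nonneg fun _ => sq_nonneg _
  refine le_of_pow_le_pow_left₀ three_ne_zero hs ?_
  calc (q ^ 2) ^ 3 = (q ^ 3) ^ 2 := by ring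
    _ ≤ triangleDensity μ U ^ 2 := pow_le_pow_left₀ (by positivity) htU 2
    _ ≤ _ := sq_triangleDensity_le hU hUb

end TriangleDensity

lemma continuous_mul_log_div (a : ℝ) : Continuous fun x => x * log (x / a) := by
  rcases eq_or_ne a 0 with rfl | ha
  · simpa using continuous_const
  · have h : (fun x => x * log (x / a)) = fun x => a * (x / a * log (x / a)) :=
      funext fun x => by field_simp
    rw [h]
    exact continuous_const.mul (continuous_mul_log.comp (continuous_id.div_const a))

lemma continuous_Ip (p : ℝ) : Continuous (Ip p) :=
  (continuous_mul_log_div p).add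
    ((continuous_mul_log_div (1 - p)).comp (continuous_const.sub continuous_id))

lemma Ip'_nonpos {p q : ℝ} (hq : 0 ≤ q) (hqp : q ≤ p) (hp : p < 1) : Ip' p q ≤ 0 := by
  have h1 : log (q / p) ≤ 0 :=
    log_nonpos (div_nonneg hq (hq.trans hqp)) (div_le_one_of_le₀ hqp (hq.trans hqp))
  have h2 : 0 ≤ log ((1 - q) / (1 - p)) :=
    log_nonneg ((one_le_div (by linarith)).2 (by linarith))
  rw [Ip']
  linarith

lemma two_mul_sub_max_sub (q w : ℝ) : 2 * q - max (2 * q - w) 0 = min w (2 * q) := by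
  rw [← min_sub_sub_left]
  simp

theorem le_integral_integral_comp_of_triangleDensity_le {α : Type*} [MeasurableSpace α]
    {μ : Measure α} [IsProbabilityMeasure μ] {f : ℝ → ℝ} (hf : Continuous f) {p q c : ℝ}
    (hq : 0 ≤ q) (hc : 0 ≤ c)
    (htangent : ∀ x ∈ Set.Icc (0 : ℝ) p, f x ≥ f q + c * ((max (2 * q - x) 0) ^ 2 - q ^ 2))
    {W : α → α → ℝ} (hrange : ∀ x y, W x y ∈ Set.Icc (0 : ℝ) p)
    (hsymm : ∀ x y, W x y = W y x) (hmeas : Measurable (uncurry W))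
    (ht : triangleDensity μ W ≤ q ^ 3) :
    f q ≤ ∫ x, ∫ y, f (W x y) ∂μ ∂μ := by
  set U : α → α → ℝ := fun x y => max (2 * q - W x y) 0
  have hU : Measurable (uncurry U) := (measurable_const.sub hmeas).max measurable_const
  have hUb : ∀ x y, |U x y| ≤ 2 * q := fun x y =>
    abs_le.2 ⟨by linarith [le_max_right (2 * q - W x y) 0],
      max_le (by linarith [(hrange x y).1]) (by linarith)⟩
  have hWb : ∀ x y, |W x y| ≤ p := fun x y =>
    abs_le.2 ⟨by linarith [(hrange x y).1, (hrange x y).2], (hrange x y).2⟩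
  have htU : triangleDensity μ (fun x y => 2 * q - U x y) ≤ q ^ 3 := by
    simp only [U, two_mul_sub_max_sub]
    exact (triangleDensity_mono (hmeas.min measurable_const) hmeas
      (fun x y => le_min (hrange x y).1 (by linarith)) (fun x y => min_le_left _ _) hWb).trans ht
  have hsq := sq_le_integral_sq_of_triangleDensity_two_mul_sub_le hq hU hUb
    (fun x y => by simp only [U, hsymm x y]) htU
  obtain ⟨B, hB⟩ := isCompact_Icc.exists_bound_of_continuousOn (hf.continuousOn (s := Set.Icc 0 p))
  have hfW : Integrable (fun w : α × α => f (W w.1 w.2)) (μ.prod μ) :=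
    .of_bound (hf.measurable.comp hmeas).aestronglyMeasurable B
      (ae_of_all _ fun w => hB _ (hrange _ _))
  have hU2 : Integrable (fun w : α × α => U w.1 w.2 ^ 2) (μ.prod μ) :=
    .of_bound (hU.pow_const 2).aestronglyMeasurable ((2 * q) ^ 2) (ae_of_all _ fun w => by
      simpa using pow_le_pow_left₀ (abs_nonneg _) (hUb w.1 w.2) 2)
  have hlin : Integrable (fun w : α × α => c * (U w.1 w.2 ^ 2 - q ^ 2)) (μ.prod μ) :=
    (hU2.sub (integrable_const _)).const_mul c
  calc f q ≤ f q + c * ((∫ x, ∫ y, U x y ^ 2 ∂μ ∂μ) - q ^ 2) := by nlinarith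
    _ = ∫ w, f q + c * (U w.1 w.2 ^ 2 - q ^ 2) ∂(μ.prod μ) := by
      rw [integral_add (integrable_const _) hlin, integral_const_mul,
        integral_sub hU2 (integrable_const _), ← integral_prod _ hU2]
      simp
    _ ≤ ∫ w, f (W w.1 w.2) ∂(μ.prod μ) :=
      integral_mono ((integrable_const _).add hlin) hfW fun w => htangent _ (hrange _ _)
    _ = ∫ x, ∫ y, f (W x y) ∂μ ∂μ := integral_prod _ hfW

instance : IsProbabilityMeasure (volume.restrict I01) :=
  ⟨by simp [I01, Real.volume_Icc]⟩

theorem stmt_5 (p q : ℝ) (hq : 0 < q) (hqp : q ≤ p) (hp : p < 1)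
    (htangent : ∀ x ∈ Set.Icc (0 : ℝ) p,
      Ip p x ≥ Ip p q + (-Ip' p q / (2 * q)) * ((max (2 * q - x) 0) ^ 2 - q ^ 2))
    (W : ℝ → ℝ → ℝ)
    (hrange : ∀ x y, W x y ∈ Set.Icc (0 : ℝ) p)
    (hsymm : ∀ x y, W x y = W y x)
    (hmeas : Measurable (Function.uncurry W))
    (ht : tK3 W ≤ q ^ 3) :
    (∫ x in I01, ∫ y in I01, Ip p (W x y)) ≥ Ip p q := by
  have hc : 0 ≤ -Ip' p q / (2 * q) :=
    div_nonneg (neg_nonneg.2 (Ip'_nonpos hq.le hqp hp)) (by positivity)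
  exact le_integral_integral_comp_of_triangleDensity_le (continuous_Ip p) hq.le hc htangent
    hrange hsymm hmeas ht
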